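/- arXiv:1204.2219 — 3 statements merged into one kernel-verified Lean document; each statement's English description precedes it below -/
import Mathlib

section
/- A natural number z > 1 is composite if and only if there exist natural numbers a, b, c, d with 0 < a, b, c, d < z such that z = a + b - c - d (as integers) and z² = a² + b² - c² - d². -/
/-!
Given `z = a + b - c - d`, the quadratic equation is equivalent to `(a - c) * (a - d) = z * (a - c - d)`,
and the linear one forces `0 < a - c < z` and `0 < a - d < z`. So a solution exhibits a multiple of `z`
as a product of two factors strictly between `0` and `z`, which is impossible for a prime `z`.
Conversely `z = (c + 1) * (d + 1)` is solved by `a = c + d + 1` (so that `a - c - d = 1`) and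
`b = c * d + c + d`.
-/

theorem Nat.exists_mul_eq_iff_not_prime {n : ℕ} (hn : 1 < n) :
    (∃ x y : ℕ, 1 < x ∧ 1 < y ∧ n = x * y) ↔ ¬n.Prime := by
  constructor
  · rintro ⟨x, y, hx, hy, rfl⟩
    exact Nat.not_prime_of_mul_eq rfl hx.ne' hy.ne'
  · intro h
    obtain ⟨x, y, hx, hy, rfl⟩ := (Nat.not_prime_iff_exists_mul_eq hn).1 h
    refine ⟨x, y, ?_, ?_, rfl⟩ <;> by_contra! <;> nlinarith

theorem Nat.not_prime_of_dvd_int_mul {p : ℕ} {u v : ℤ} (hu : 0 < u) (hup : u < p)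
    (hv : 0 < v) (hvp : v < p) (h : (p : ℤ) ∣ u * v) : ¬p.Prime := fun hp =>
  (Int.Prime.dvd_mul' hp h).elim (fun h => (Int.le_of_dvd hu h).not_gt hup)
    (fun h => (Int.le_of_dvd hv h).not_gt hvp)

section Identity

variable {R : Type*} [CommRing R] {z a b c d : R}

theorem sq_sub_sum_sq_eq_of_eq_add_sub (h : z = a + b - c - d) :
    z ^ 2 - (a ^ 2 + b ^ 2 - c ^ 2 - d ^ 2) = 2 * (z * (a - c - d) - (a - c) * (a - d)) := by
  subst h
  ring

theorem sq_eq_sum_sq_iff_mul_eq [NoZeroDivisors R] [NeZero (2 : R)] (h : z = a + b - c - d) :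
    z ^ 2 = a ^ 2 + b ^ 2 - c ^ 2 - d ^ 2 ↔ (a - c) * (a - d) = z * (a - c - d) := by
  rw [← sub_eq_zero, sq_sub_sum_sq_eq_of_eq_add_sub h, mul_eq_zero, or_iff_right two_ne_zero,
    sub_eq_zero, eq_comm]

end Identity

theorem composite_iff_exists_abcd (z : ℕ) (hz : 1 < z) :
    (∃ x y : ℕ, 1 < x ∧ 1 < y ∧ z = x * y) ↔
      ∃ a b c d : ℕ,
        0 < a ∧ a < z ∧ 0 < b ∧ b < z ∧ 0 < c ∧ c < z ∧ 0 < d ∧ d < z ∧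
        (z : ℤ) = (a : ℤ) + b - c - d ∧
        (z : ℤ) ^ 2 = (a : ℤ) ^ 2 + (b : ℤ) ^ 2 - (c : ℤ) ^ 2 - (d : ℤ) ^ 2 := by
  constructor
  · rintro ⟨x, y, hx, hy, rfl⟩
    obtain ⟨c, rfl⟩ : ∃ c, y = c + 1 := ⟨y - 1, by omega⟩
    obtain ⟨d, rfl⟩ : ∃ d, x = d + 1 := ⟨x - 1, by omega⟩
    refine ⟨c + d + 1, c * d + c + d, c, d, ?_, ?_, ?_, ?_, ?_, ?_, ?_, ?_,
      by push_cast; ring, by push_cast; ring⟩ <;> nlinarith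
  · rintro ⟨a, b, c, d, -, haz, -, hbz, hc, -, hd, -, hlin, hsq⟩
    rw [sq_eq_sum_sq_iff_mul_eq hlin] at hsq
    rw [Nat.exists_mul_eq_iff_not_prime hz]
    exact Nat.not_prime_of_dvd_int_mul (u := a - c) (v := a - d)
      (by omega) (by omega) (by omega) (by omega) ⟨_, hsq⟩
end

section
/- Suppose positive integers z, b, c, d satisfy b - c - d > 0 and z(b - c - d) = (b - c)(b - d), with z > b, c, d. Then z is composite: there exist natural numbers t₁, t₂, s₁, s₂ ≥ 1 with z = (t₁ + s₁)(t₂ + s₂). -/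
/-!
Clearing the denominator, `z * (b - c - d) = (b - c) * (b - d)` with both factors on the right
positive and smaller than `z`. A prime `z` would divide one of them, which is impossible, so `z`
is a product of two factors `m, n ≥ 2`, and `z = (1 + (m - 1)) * (1 + (n - 1))`.
-/

theorem Nat.not_prime_of_mul_eq_mul_of_lt {p e a b : ℕ} (h : p * e = a * b) (he : 0 < e)
    (ha : a < p) (hb : b < p) : ¬ p.Prime := by
  intro hp
  have hab : 0 < a * b := h ▸ Nat.mul_pos hp.pos he
  rcases hp.dvd_mul.mp (Dvd.intro e h) with hpa | hpb
  · exact absurd (Nat.le_of_dvd (Nat.pos_of_mul_pos_right hab) hpa) ha.not_ge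
  · exact absurd (Nat.le_of_dvd (Nat.pos_of_mul_pos_left hab) hpb) hb.not_ge

theorem Nat.exists_two_le_mul_eq_of_not_prime {n : ℕ} (hn : 2 ≤ n) (hp : ¬ n.Prime) :
    ∃ a b, 2 ≤ a ∧ 2 ≤ b ∧ n = a * b := by
  obtain ⟨a, b, ha, hb, rfl⟩ := (Nat.not_prime_iff_exists_mul_eq hn).mp hp
  refine ⟨a, b, ?_, ?_, rfl⟩
  · by_contra! h
    interval_cases a <;> omega
  · by_contra! h
    interval_cases b <;> omega

theorem z_is_composite_general (z b c d : ℤ)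
    (hc : 0 < c) (hd : 0 < d)
    (ht : 0 < b - c - d)
    (heq : z * (b - c - d) = (b - c) * (b - d))
    (hbz : b < z) :
    ∃ t₁ t₂ s₁ s₂ : ℕ, 1 ≤ t₁ ∧ 1 ≤ t₂ ∧ 1 ≤ s₁ ∧ 1 ≤ s₂ ∧
      z = ((t₁ + s₁) * (t₂ + s₂) : ℕ) := by
  lift b - c - d to ℕ using ht.le with E hE
  lift b - c to ℕ using by omega with B hB
  lift b - d to ℕ using by omega with D hD
  lift z to ℕ using by omega
  have hBz : B < z := by omega
  have hDz : D < z := by omega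
  have hnp : ¬ z.Prime :=
    Nat.not_prime_of_mul_eq_mul_of_lt (by exact_mod_cast heq) (by omega) hBz hDz
  obtain ⟨m, n, hm, hn, rfl⟩ := Nat.exists_two_le_mul_eq_of_not_prime (by omega) hnp
  refine ⟨1, 1, m - 1, n - 1, le_rfl, le_rfl, by omega, by omega, ?_⟩
  rw [Nat.add_sub_cancel' (by omega), Nat.add_sub_cancel' (by omega)]

theorem z_is_composite (z b c d : ℤ)
    (hz : 0 < z) (hb : 0 < b) (hc : 0 < c) (hd : 0 < d)
    (ht : 0 < b - c - d)
    (heq : z * (b - c - d) = (b - c) * (b - d))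
    (hbz : b < z) (hcz : c < z) (hdz : d < z) :
    ∃ t₁ t₂ s₁ s₂ : ℕ, 1 ≤ t₁ ∧ 1 ≤ t₂ ∧ 1 ≤ s₁ ∧ 1 ≤ s₂ ∧
      z = ((t₁ + s₁) * (t₂ + s₂) : ℕ) :=
  z_is_composite_general z b c d hc hd ht heq hbz
end

section
/- For all natural numbers n, m with m ≥ 1: n^m = Σ_{k=0}^{m-1} A(m,k) · C(n+k, m), where A(m,k) is the Eulerian number and C denotes the binomial coefficient. -/
/-!
Induction on `m`, for the version of the sum that runs up to `k = m` (which also holds for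
`m = 0`; its last term vanishes for `m ≥ 1`). Multiplying `n ^ m` by `n` and using
`n C(n + k, m) = (k + 1) C(n + k, m + 1) + (m - k) C(n + k + 1, m + 1)` produces exactly the
recurrence `A(m + 1, k + 1) = (k + 2) A(m, k + 1) + (m - k) A(m, k)` of the Eulerian numbers,
which follows termwise from the explicit formula by Pascal's rule and absorption.
-/

/-- The Eulerian number A(m,k), via the explicit formula. -/
def eulerian (m k : ℕ) : ℤ :=
  ∑ i ∈ Finset.range (k + 1), (-1) ^ i * (Nat.choose (m + 1) i) * ((k + 1 - i : ℕ) : ℤ) ^ m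

open Finset

/-- Absorption, stated over `ℤ` so that it also holds for `n < k` (where `n - k` would truncate). -/
theorem Nat.cast_succ_mul_choose_succ (n k : ℕ) :
    ((k : ℤ) + 1) * n.choose (k + 1) = ((n : ℤ) - k) * n.choose k := by
  rcases le_or_gt k n with hkn | hnk
  · have h := Nat.choose_succ_right_eq n k
    zify [hkn] at h
    linarith
  · rw [Nat.choose_eq_zero_of_lt hnk, Nat.choose_eq_zero_of_lt (by omega)]
    simp

theorem Nat.cast_mul_choose_add (n k m : ℕ) :
    (n : ℤ) * (n + k).choose m =
      ((k : ℤ) + 1) * (n + k).choose (m + 1) + ((m : ℤ) - k) * (n + (k + 1)).choose (m + 1) := by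
  have pascal := Nat.choose_succ_succ (n + k) m
  have absorb := Nat.cast_succ_mul_choose_succ (n + k) m
  rw [← add_assoc, pascal]
  push_cast at absorb ⊢
  linear_combination -absorb

theorem eulerian_zero_right (m : ℕ) : eulerian m 0 = 1 := by
  simp [eulerian]

theorem eulerian_succ_succ (m k : ℕ) :
    eulerian (m + 1) (k + 1) = (k + 2) * eulerian m (k + 1) + (m - k) * eulerian m k := by
  unfold eulerian
  rw [mul_sum, mul_sum, sum_range_succ' _ (k + 1), sum_range_succ' _ (k + 1),
    add_right_comm (∑ i ∈ range (k + 1), ((k : ℤ) + 2) * _), ← sum_add_distrib]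
  congr 1
  · refine sum_congr rfl fun i hi => ?_
    have hik : i ≤ k := Nat.lt_succ_iff.mp (mem_range.mp hi)
    have pascal := Nat.choose_succ_succ (m + 1) i
    have absorb := Nat.cast_succ_mul_choose_succ (m + 1) i
    rw [show k + 1 + 1 - (i + 1) = k + 1 - i by omega, pascal]
    push_cast [Nat.sub_add_comm hik, hik] at absorb ⊢
    linear_combination (-1) ^ i * ((k : ℤ) + 1 - i) ^ m * absorb
  · push_cast [Nat.choose_zero_right]
    ring

theorem eulerian_eq_zero_of_le {m k : ℕ} (hmk : m ≤ k) (hk : 1 ≤ k) : eulerian m k = 0 := by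
  induction m generalizing k with
  | zero =>
    obtain ⟨j, rfl⟩ := Nat.exists_eq_add_of_le' hk
    simp [eulerian, sum_range_succ', Nat.choose_succ_succ]
  | succ m ih =>
    obtain ⟨j, rfl⟩ := Nat.exists_eq_add_of_le' hk
    rw [eulerian_succ_succ]
    rcases Nat.eq_zero_or_pos j with rfl | hj
    · obtain rfl : m = 0 := by omega
      simp [ih zero_le_one le_rfl]
    · simp [ih (by omega : m ≤ j + 1) (by omega), ih (by omega : m ≤ j) hj]

theorem pow_eq_sum_eulerian_mul_choose (n m : ℕ) :
    (n : ℤ) ^ m = ∑ k ∈ range (m + 1), eulerian m k * (n + k).choose m := by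
  induction m with
  | zero => simp [eulerian_zero_right]
  | succ m ih =>
    let f : ℕ → ℤ := fun k => (k + 1) * eulerian m k * (n + k).choose (m + 1)
    have hshift : ∑ k ∈ range (m + 1), f k =
        ∑ k ∈ range (m + 1), (k + 2) * eulerian m (k + 1) * (n + (k + 1)).choose (m + 1) +
          n.choose (m + 1) := by
      have hvanish : f (m + 1) = 0 := by simp [f, eulerian_eq_zero_of_le m.le_succ m.succ_pos]
      rw [← add_zero (∑ k ∈ range (m + 1), f k), ← hvanish, ← sum_range_succ, sum_range_succ']
      simp only [f, eulerian_zero_right, Nat.cast_succ, Nat.cast_zero, zero_add, add_zero, one_mul,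
        add_assoc, one_add_one_eq_two]
    calc (n : ℤ) ^ (m + 1)
        = ∑ k ∈ range (m + 1), eulerian m k * ((n + k).choose m * n) := by
          rw [pow_succ, ih, sum_mul]; simp only [mul_assoc]
      _ = ∑ k ∈ range (m + 1),
            (f k + (m - k) * eulerian m k * (n + (k + 1)).choose (m + 1)) := by
          refine sum_congr rfl fun k _ => ?_
          rw [mul_comm _ (n : ℤ), Nat.cast_mul_choose_add]
          ring
      _ = ∑ k ∈ range (m + 1), eulerian (m + 1) (k + 1) * (n + (k + 1)).choose (m + 1) +
            eulerian (m + 1) 0 * (n + 0).choose (m + 1) := by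
          rw [sum_add_distrib, hshift, add_right_comm, ← sum_add_distrib, eulerian_zero_right,
            one_mul, add_zero]
          congr 1
          refine sum_congr rfl fun k _ => ?_
          rw [eulerian_succ_succ]
          ring
      _ = _ := by rw [sum_range_succ' _ (m + 1)]

theorem worpitzky (n m : ℕ) (hm : 1 ≤ m) :
    (n : ℤ) ^ m = ∑ k ∈ Finset.range m, eulerian m k * (Nat.choose (n + k) m : ℤ) := by
  rw [pow_eq_sum_eulerian_mul_choose, sum_range_succ, eulerian_eq_zero_of_le le_rfl hm, zero_mul,
    add_zero]
end
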